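/- arXiv:2202.03356 — 2 statements merged into one kernel-verified Lean document; each statement's English description precedes it below -/
import Mathlib

section
/- Let G be a d-regular digraph on N ≥ 2 vertices and (G,A_G) a bandwidth optimal allgather algorithm. Then for every n ≥ 1, the Cartesian power algorithm (G^{□n}, A_{G^{□n}}) is a bandwidth optimal allgather algorithm on N^n nodes. -/
open MeasureTheory

namespace Collective

/-- A communication tuple `((w,C),(u,v),t)`. -/
abbrev Tup (V : Type*) := V × Set ℝ × (V × V) × ℕ

/-- A schedule is a set of communication tuples. -/
abbrev Sched (V : Type*) := Set (Tup V)

/-- The data shard, identified with the interval `[0,1)`. -/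
def shard : Set ℝ := Set.Ico (0 : ℝ) 1

/-- `A` is a valid (finite) schedule on the digraph with edge relation `E`:
every tuple uses an edge, its chunk is a measurable subset of the shard, and
its communication step is at least `1`. -/
def IsSched {V : Type*} (E : V → V → Prop) (A : Sched V) : Prop :=
  A.Finite ∧ ∀ p ∈ A, E p.2.2.1.1 p.2.2.1.2 ∧ p.2.1 ⊆ shard ∧
    MeasurableSet p.2.1 ∧ 1 ≤ p.2.2.2

/-- The maximum communication step occurring in a schedule. -/
noncomputable def tmax {V : Type*} (A : Sched V) : ℕ :=
  sSup {t | ∃ p ∈ A, p.2.2.2 = t}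

/-- `A` is a reduce-scatter schedule. -/
def IsReduceScatter {V : Type*} (A : Sched V) : Prop :=
  ∀ u v : V, u ≠ v → ∀ x ∈ shard,
    ∃ (m : ℕ) (w : Fin (m + 1) → V) (C : Fin m → Set ℝ) (t : Fin m → ℕ),
      w 0 = u ∧ w (Fin.last m) = v ∧ StrictMono t ∧
      ∀ i : Fin m, (v, C i, (w i.castSucc, w i.succ), t i) ∈ A ∧ x ∈ C i

/-- `A` is an allgather schedule. -/
def IsAllgather {V : Type*} (A : Sched V) : Prop :=
  ∀ u v : V, u ≠ v → ∀ x ∈ shard,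
    ∃ (m : ℕ) (w : Fin (m + 1) → V) (C : Fin m → Set ℝ) (t : Fin m → ℕ),
      w 0 = u ∧ w (Fin.last m) = v ∧ StrictMono t ∧
      ∀ i : Fin m, (u, C i, (w i.castSucc, w i.succ), t i) ∈ A ∧ x ∈ C i

/-- A digraph is `d`-regular if every vertex has out-degree `d` and in-degree `d`. -/
def IsRegular {V : Type*} (E : V → V → Prop) (d : ℕ) : Prop :=
  ∀ v : V, {w | E v w}.ncard = d ∧ {w | E w v}.ncard = d

/-- Node latency `T_L(A) = t_max · α`. -/
noncomputable def latT {V : Type*} (α : ℝ) (A : Sched V) : ℝ := (tmax A : ℝ) * α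

/-- Total chunk length sent over edge `e` at step `t`. -/
noncomputable def edgeLoad {V : Type*} (A : Sched V) (e : V × V) (t : ℕ) : ℝ :=
  ∑ᶠ p ∈ {p : Tup V | p ∈ A ∧ p.2.2.1 = e ∧ p.2.2.2 = t}, (volume p.2.1).toReal

/-- Bandwidth runtime of step `t`:
`T_B(A_t,M,B) = (d/B)·(M/N)·max_{(u,v)∈E} Σ_{((w,C),(u,v),t)∈A_t} |C|`. -/
noncomputable def stepT {V : Type*} (E : V → V → Prop) (d : ℕ) (M B : ℝ)
    (A : Sched V) (t : ℕ) : ℝ :=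
  ((d : ℝ) / B) * (M / (Nat.card V : ℝ)) *
    sSup ((fun e => edgeLoad A e t) '' {e : V × V | E e.1 e.2})

/-- Bandwidth runtime `T_B(A,M,B) = Σ_{t=1}^{t_max} T_B(A_t,M,B)`. -/
noncomputable def bwT {V : Type*} (E : V → V → Prop) (d : ℕ) (M B : ℝ)
    (A : Sched V) : ℝ :=
  ∑ t ∈ Finset.Icc 1 (tmax A), stepT E d M B A t

/-- There is a directed walk of length `n` from `u` to `v`. -/
def HasWalk {V : Type*} (E : V → V → Prop) (u v : V) (n : ℕ) : Prop :=
  ∃ w : Fin (n + 1) → V, w 0 = u ∧ w (Fin.last n) = v ∧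
    ∀ i : Fin n, E (w i.castSucc) (w i.succ)

/-- Strong connectivity. -/
def StronglyConnected {V : Type*} (E : V → V → Prop) : Prop :=
  ∀ u v : V, ∃ n, HasWalk E u v n

/-- Directed graph distance: the length of a shortest directed walk. -/
noncomputable def dist {V : Type*} (E : V → V → Prop) (u v : V) : ℕ :=
  sInf {n | HasWalk E u v n}

/-- Diameter `D(G) = max_{u,v} d(u,v)`. -/
noncomputable def diam {V : Type*} (E : V → V → Prop) : ℕ :=
  sSup {n | ∃ u v : V, dist E u v = n}

/-- `A` is a shortest-path (reduce-scatter style) schedule: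
`((v,C),(u,w),t) ∈ A` iff `d(u,v) = d(w,v)+1 = D(G)+1−t`. -/
def IsShortestPathSched {V : Type*} (E : V → V → Prop) (A : Sched V) : Prop :=
  (∀ (v : V) (C : Set ℝ) (u w : V) (t : ℕ), (v, C, (u, w), t) ∈ A →
      dist E u v = dist E w v + 1 ∧ dist E u v + t = diam E + 1) ∧
  (∀ (v u w : V) (t : ℕ), E u w → dist E u v = dist E w v + 1 →
      dist E u v + t = diam E + 1 → ∃ C : Set ℝ, (v, C, (u, w), t) ∈ A)

/-- The transpose digraph. -/
def transpose {V : Type*} (E : V → V → Prop) : V → V → Prop := fun u v => E v u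

/-- The reverse schedule `A^T`: `((w,C),(v,u),t_max−t+1) ∈ A^T` iff `((w,C),(u,v),t) ∈ A`. -/
noncomputable def reverseSched {V : Type*} (A : Sched V) : Sched V :=
  (fun q : Tup V => (q.1, q.2.1, (q.2.2.1.2, q.2.2.1.1), tmax A + 1 - q.2.2.2)) '' A

/-- The schedule obtained by relabeling vertices along `f`. -/
def mapSched {V : Type*} (f : V ≃ V) (A : Sched V) : Sched V :=
  (fun q : Tup V => (f q.1, q.2.1, (f q.2.2.1.1, f q.2.2.1.2), q.2.2.2)) '' A

/-- The vertex set of the line graph `L(G)`: the edges of `G`. -/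
def lineV {V : Type*} (E : V → V → Prop) : Type _ := {e : V × V // E e.1 e.2}

/-- The edge relation of the line graph: `uu' → vv'` iff `u' = v`. -/
def lineE {V : Type*} (E : V → V → Prop) : lineV E → lineV E → Prop :=
  fun e f => e.1.2 = f.1.1

/-- The line-graph-expanded schedule `A_{L(G)}`. -/
noncomputable def lineSched {V : Type*} (E : V → V → Prop) (A : Sched V) :
    Sched (lineV E) :=
  {p | (∃ (v v' w u u' : V) (C : Set ℝ) (t : ℕ)
          (hvv' : E v v') (hwu : E w u) (huu' : E u u'),
          (v, C, (u, u'), t) ∈ A ∧ (v, v') ≠ (w, u) ∧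
          p = (⟨(v, v'), hvv'⟩, C, (⟨(w, u), hwu⟩, ⟨(u, u'), huu'⟩), t))
     ∨ (∃ (u v v' : V) (huv : E u v) (hvv' : E v v'),
          (u, v) ≠ (v, v') ∧
          p = (⟨(v, v'), hvv'⟩, shard, (⟨(u, v), huv⟩, ⟨(v, v'), hvv'⟩), tmax A + 1))}

/-- A digraph bundled with a schedule, used to iterate line graph expansion. -/
structure Alg : Type 1 where
  V : Type
  E : V → V → Prop
  A : Sched V

/-- One application of line graph expansion to a bundled algorithm. -/
noncomputable def lineAlg (G : Alg) : Alg :=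
  ⟨lineV G.E, lineE G.E, lineSched G.E G.A⟩

/-- The degree-expanded digraph `G*n`. -/
def degE {V : Type*} (E : V → V → Prop) (n : ℕ) :
    (V × Fin n) → (V × Fin n) → Prop :=
  fun a b => E a.1 b.1

/-- The degree-expanded schedule `A_{G*n}`, relative to an enumeration `enum` of the
out-edges of each vertex of `G*n`. -/
noncomputable def degSched {V : Type*} (A : Sched V) (n d : ℕ)
    (enum : V × Fin n → Fin (n * d) → V × Fin n) : Sched (V × Fin n) :=
  {p | (∃ (u : V) (i j : Fin n) (β : Fin (n * d)), i ≠ j ∧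
          p = ((u, j),
               Set.Ico (((β : ℕ) : ℝ) / ((n : ℝ) * (d : ℝ)))
                 ((((β : ℕ) : ℝ) + 1) / ((n : ℝ) * (d : ℝ))),
               ((u, i), enum (u, i) β), 1))
     ∨ (∃ (w u v : V) (C : Set ℝ) (t : ℕ) (i j : Fin n),
          (w, C, (u, v), t) ∈ A ∧ p = ((w, j), C, ((u, i), (v, j)), t + 1))}

/-- The edge relation of the Cartesian power `G^{□n}`. -/
def powE {V : Type*} (E : V → V → Prop) (n : ℕ) :
    (Fin n → V) → (Fin n → V) → Prop :=
  fun u v => ∃ j : Fin n, E (u j) (v j) ∧ ∀ k : Fin n, k ≠ j → u k = v k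

/-- Cyclic rotation of coordinates by `i`. -/
def rot {V : Type*} {n : ℕ} (i : Fin n) (v : Fin n → V) : Fin n → V :=
  fun k => v (k - i)

/-- The Cartesian power allgather schedule `A_{G^{□n}}`: the `i`-th of the `n` schedules
`A^{(i)}` (a coordinate rotation of `A^{(1)}`) is run on the `i`-th equal subshard. -/
noncomputable def powSched {V : Type*} (A : Sched V) (n : ℕ) : Sched (Fin n → V) :=
  {p | ∃ (i j : Fin n) (w u v : V) (C : Set ℝ) (t : ℕ) (a b : Fin n → V),
        (w, C, (u, v), t) ∈ A ∧ a j = w ∧ b j = u ∧ (∀ k : Fin n, j < k → a k = b k) ∧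
        p = (rot i a, (fun x : ℝ => (((i : ℕ) : ℝ) + x) / (n : ℝ)) '' C,
             (rot i b, rot i (Function.update b j v)), t + (j : ℕ) * tmax A)}

/-- The edge relation of the Cartesian product `G₁□⋯□G_n` of a family of digraphs. -/
def boxE {n : ℕ} {V : Fin n → Type*} (E : ∀ i, V i → V i → Prop) :
    (∀ i, V i) → (∀ i, V i) → Prop :=
  fun u v => ∃ j : Fin n, E j (u j) (v j) ∧ ∀ k : Fin n, k ≠ j → u k = v k

/-- The generalized Kautz digraph `Π_{d,m}` on `ℤ/mℤ`:
`x → y` iff `y ≡ −d·x − a (mod m)` for some `a ∈ {1,…,d}`. -/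
def kautzE (d m : ℕ) : ZMod m → ZMod m → Prop :=
  fun x y => ∃ a : ℕ, 1 ≤ a ∧ a ≤ d ∧ y = -(d : ZMod m) * x - (a : ZMod m)

end Collective
namespace Collective

/-!
Let `T = tmax A`. The subschedule `A^{(i)}` runs `A` once on every coordinate, in the order
`i, i + 1, …`, one phase of `T` steps per coordinate; chaining the walks of `A` phase by phase
delivers every point of every shard, so the power schedule is an allgather.

On a product edge moving coordinate `j₀`, at step `t + j T` only `A^{(j₀ - j)}` is active, and its
tuples there are the tuples of `A` on the underlying edge at step `t`, repeated for each of the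
`N ^ j` values of the root on the coordinates handled before, with chunks shrunk by `1 / n`.
Hence step `t + j T` costs `N ^ (j + 1) / N ^ n` times step `t` of `A`, and the geometric sum
`∑ j < n, N ^ (j + 1) / N ^ n · (M / B) (N - 1) / N` is `(M / B) (N ^ n - 1) / N ^ n`.

This needs `G` to be loopless, since a loop of `G^{□n}` collects load from all coordinates. A loop
at `v` leaves only `d - 1` edges to carry the `N - 1` foreign shards into `v`; at most
`(d - 1) ∑ₜ maxload(t) = (d - 1)(N - 1) / d` fits through them within the optimal runtime.
-/

open Finset Function
open scoped Pointwise

lemma eq_of_update_eq_update {α β : Type*} [DecidableEq α] {f : α → β} {a a' : α} {b b' : β}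
    (h : update f a b = update f a' b') (hb : b ≠ f a) : a = a' ∧ b = b' := by
  have ha := congrFun h a
  rw [update_self] at ha
  by_cases haa : a = a'
  · subst haa
    simpa using ha
  · rw [update_of_ne haa] at ha
    exact absurd ha hb

lemma sum_Icc_mul_eq_sum_sum {M : Type*} [AddCommMonoid M] (f : ℕ → M) (n T : ℕ) :
    ∑ s ∈ Icc 1 (n * T), f s = ∑ j ∈ range n, ∑ t ∈ Icc 1 T, f (t + j * T) := by
  induction n with
  | zero => simp
  | succ n ih =>
    have hIcc : ∀ m, Icc 1 m = Ioc 0 m := Icc_add_one_left_eq_Ioc 0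
    rw [sum_range_succ, ← ih, hIcc, hIcc, hIcc,
      ← sum_Ioc_consecutive _ (Nat.zero_le (n * T)) (by nlinarith)]
    have hshift : Ioc (n * T) ((n + 1) * T) = (Ioc 0 T).map (addRightEmbedding (n * T)) := by
      rw [map_add_right_Ioc, zero_add, add_one_mul, add_comm T]
    rw [hshift, sum_map]
    rfl

lemma eq_of_add_mul_eq_add_mul {T t t' j j' : ℕ} (ht : t ∈ Icc 1 T) (ht' : t' ∈ Icc 1 T)
    (h : t + j * T = t' + j' * T) : j = j' ∧ t = t' := by
  rw [mem_Icc] at ht ht'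
  have hdiv : ∀ {s i : ℕ}, 1 ≤ s → s ≤ T → (s + i * T - 1) / T = i := by
    intro s i h1 h2
    rw [Nat.mul_comm, show s + T * i - 1 = s - 1 + T * i by omega,
      Nat.add_mul_div_left _ _ (by omega), Nat.div_eq_of_lt (by omega), zero_add]
  have hj : j = j' := by
    have := hdiv (i := j) ht.1 ht.2
    rwa [h, hdiv ht'.1 ht'.2, eq_comm] at this
  subst hj
  exact ⟨rfl, by omega⟩

lemma finsum_mem_fst_of_ncard_eq {α β M : Type*} [Finite β] [AddCommMonoid M] {s : Set α}
    (hs : s.Finite) {g : α → Set β} {K : ℕ} (hg : ∀ a ∈ s, (g a).ncard = K) (f : α → M) :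
    ∑ᶠ x ∈ {x : α × β | x.1 ∈ s ∧ x.2 ∈ g x.1}, f x.1 = K • ∑ᶠ a ∈ s, f a := by
  have hS : {x : α × β | x.1 ∈ s ∧ x.2 ∈ g x.1}.Finite :=
    (hs.prod Set.finite_univ).subset fun x hx => ⟨hx.1, trivial⟩
  rw [finsum_mem_eq_finite_toFinset_sum _ hS, finsum_mem_eq_finite_toFinset_sum _ hs,
    sum_finset_product _ hs.toFinset (fun a => (Set.toFinite (g a)).toFinset) (by simp),
    smul_sum]
  refine sum_congr rfl fun a ha => ?_
  simp only [sum_const]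
  rw [← Set.ncard_eq_toFinset_card, hg a (by simpa using ha)]

lemma ncard_setOf_eqOn_Ici {V : Type*} [Finite V] {n : ℕ} (j : Fin n) (c : Fin n → V) :
    {a : Fin n → V | Set.EqOn a c (Set.Ici j)}.ncard = Nat.card V ^ (j : ℕ) := by
  classical
  have := Fintype.ofFinite V
  have hset : {a : Fin n → V | Set.EqOn a c (Set.Ici j)}
      = ↑(Fintype.piFinset fun k : Fin n => if (k : ℕ) < j then univ else {c k}) := by
    ext a
    simp only [Set.mem_ofPred_eq, mem_coe, Fintype.mem_piFinset]
    refine forall_congr' fun k => ?_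
    split_ifs with hk
    · simp only [mem_univ, iff_true]
      intro h
      exact absurd (Fin.le_def.1 h) (by omega)
    · simp [Fin.le_def, not_lt.1 hk]
  rw [hset, Set.ncard_coe_finset, Fintype.card_piFinset, Nat.card_eq_fintype_card]
  calc ∏ k : Fin n, #(if (k : ℕ) < j then univ else {c k})
      = ∏ k : Fin n, if (k : ℕ) < j then Fintype.card V else 1 :=
        prod_congr rfl fun k _ => by split_ifs <;> simp
    _ = Fintype.card V ^ (j : ℕ) := by
        rw [prod_ite, prod_const, prod_const_one, mul_one, Fin.card_filter_val_lt,
          min_eq_right j.isLt.le]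

lemma volume_image_add_div (a : ℝ) {n : ℕ} (hn : n ≠ 0) (s : Set ℝ) :
    volume ((fun x => (a + x) / n) '' s) = volume s / n := by
  have hn' : (n : ℝ) ≠ 0 := Nat.cast_ne_zero.2 hn
  rw [Set.image_eq_preimage_of_inverse (g := fun y => n * y - a)
      (fun x => by field_simp; ring) (fun y => by field_simp; ring),
    show (fun y : ℝ => n * y - a) ⁻¹' s = (fun y : ℝ => n * y) ⁻¹' ((fun z : ℝ => z + -a) ⁻¹' s)
      by simp only [sub_eq_add_neg]; rfl,
    Real.volume_preimage_mul_left hn', measure_preimage_add_right, abs_inv, Nat.abs_cast,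
    ENNReal.ofReal_inv_of_pos (by positivity), ENNReal.ofReal_natCast, ENNReal.div_eq_inv_mul]

section Rotation

variable {V : Type*} {n : ℕ} [NeZero n]

lemma rot_apply_add (i k : Fin n) (f : Fin n → V) : rot i f (k + i) = f k := by
  simp [rot]

lemma rot_add_right (i : Fin n) (f : Fin n → V) : rot i (fun k => f (k + i)) = f := by
  funext k
  simp [rot]

lemma rot_injective (i : Fin n) : Injective (rot (V := V) i) :=
  (Equiv.subRight i).surjective.injective_comp_right

lemma rot_update (i j : Fin n) (f : Fin n → V) (c : V) :
    rot i (update f j c) = update (rot i f) (j + i) c :=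
  update_comp_equiv f (Equiv.subRight i) j c

end Rotation

section Schedule

variable {V : Type*} {E : V → V → Prop} {A : Sched V}

lemma le_tmax (hfin : A.Finite) {p : Tup V} (hp : p ∈ A) : p.2.2.2 ≤ tmax A :=
  le_csSup (hfin.image _).bddAbove ⟨p, hp, rfl⟩

lemma isGreatest_tmax (hfin : A.Finite) (hne : A.Nonempty) :
    IsGreatest ((fun p : Tup V => p.2.2.2) '' A) (tmax A) :=
  ⟨(hne.image _).csSup_mem (hfin.image _), fun _ ⟨_, hp, h⟩ => h ▸ le_tmax hfin hp⟩

lemma edgeLoad_eq_sum [DecidableEq V] (hfin : A.Finite) (e : V × V) (t : ℕ) :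
    edgeLoad A e t =
      ∑ p ∈ hfin.toFinset with p.2.2.1 = e ∧ p.2.2.2 = t, (volume p.2.1).toReal := by
  rw [edgeLoad, finsum_mem_eq_finite_toFinset_sum _ (hfin.subset fun p hp => hp.1)]
  congr 1
  ext p
  simp only [Set.Finite.mem_toFinset, mem_filter]
  rfl

lemma edgeLoad_le_sSup [Finite V] {e : V × V} (he : E e.1 e.2) (t : ℕ) :
    edgeLoad A e t ≤ sSup ((fun e => edgeLoad A e t) '' {e | E e.1 e.2}) :=
  le_csSup ((Set.toFinite _).image _).bddAbove ⟨e, he, rfl⟩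

lemma powE_iff {n : ℕ} {p q : Fin n → V} : powE E n p q ↔ ∃ j y, E (p j) y ∧ q = update p j y := by
  constructor
  · rintro ⟨j, hE, hq⟩
    exact ⟨j, q j, hE, eq_update_iff.2 ⟨rfl, fun k hk => (hq k hk).symm⟩⟩
  · rintro ⟨j, y, hE, rfl⟩
    exact ⟨j, by rwa [update_self], fun k hk => (update_of_ne hk ..).symm⟩

end Schedule

section Loopless

variable {V : Type*} {E : V → V → Prop} {A : Sched V}

lemma one_le_sum_volume_arrivals [DecidableEq V] (hA : IsSched E A) (hAG : IsAllgather A)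
    {u v : V} (huv : u ≠ v) :
    1 ≤ ∑ p ∈ (hA.1.toFinset.filter fun p => p.2.2.1.2 = v ∧ p.2.2.1.1 ≠ v) with p.1 = u,
      (volume p.2.1).toReal := by
  set F := (hA.1.toFinset.filter fun p => p.2.2.1.2 = v ∧ p.2.2.1.1 ≠ v).filter fun p => p.1 = u
  have hcover : shard ⊆ ⋃ p ∈ F, p.2.1 := by
    intro x hx
    obtain ⟨m, w, C, t, hw0, hwl, -, hs⟩ := hAG u v huv x hx
    obtain ⟨i, hi, hi'⟩ : ∃ i : Fin m, w i.castSucc ≠ v ∧ w i.succ = v := by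
      by_contra! h
      exact Fin.induction (motive := fun k => w k ≠ v) (hw0 ▸ huv) h (Fin.last m) hwl
    exact Set.mem_biUnion (x := (u, C i, (w i.castSucc, w i.succ), t i))
      (by simpa [F, hi, hi'] using (hs i).1) (hs i).2
  have hfin : ∀ p ∈ F, volume p.2.1 ≠ ⊤ := fun p hp =>
    ((measure_mono (hA.2 p (hA.1.mem_toFinset.1 (mem_filter.1 (mem_filter.1 hp).1).1)).2.1).trans_lt
      (by simp [shard])).ne
  calc (1 : ℝ) = (volume shard).toReal := by simp [shard]
    _ ≤ (∑ p ∈ F, volume p.2.1).toReal := ENNReal.toReal_mono (ENNReal.sum_ne_top.2 hfin)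
        ((measure_mono hcover).trans (measure_biUnion_finset_le F _))
    _ = _ := ENNReal.toReal_sum hfin

lemma card_sub_one_le_sum_volume_arrivals [Finite V] [DecidableEq V] (hA : IsSched E A)
    (hAG : IsAllgather A) (v : V) :
    (Nat.card V : ℝ) - 1 ≤
      ∑ p ∈ hA.1.toFinset with p.2.2.1.2 = v ∧ p.2.2.1.1 ≠ v, (volume p.2.1).toReal := by
  have := Fintype.ofFinite V
  calc (Nat.card V : ℝ) - 1 = ∑ u ∈ univ.erase v, (1 : ℝ) := by
        rw [sum_const, card_erase_of_mem (mem_univ v), card_univ, nsmul_eq_mul, mul_one,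
          Nat.cast_sub (Fintype.card_pos_iff.2 ⟨v⟩), Nat.card_eq_fintype_card, Nat.cast_one]
    _ ≤ ∑ u ∈ univ.erase v, ∑ p ∈ (hA.1.toFinset.filter fun p => p.2.2.1.2 = v ∧ p.2.2.1.1 ≠ v)
          with p.1 = u, (volume p.2.1).toReal :=
        sum_le_sum fun u hu => one_le_sum_volume_arrivals hA hAG (ne_of_mem_erase hu)
    _ ≤ ∑ u, ∑ p ∈ (hA.1.toFinset.filter fun p => p.2.2.1.2 = v ∧ p.2.2.1.1 ≠ v)
          with p.1 = u, (volume p.2.1).toReal :=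
        sum_le_sum_of_subset_of_nonneg (erase_subset v univ) fun _ _ _ =>
          sum_nonneg fun _ _ => ENNReal.toReal_nonneg
    _ = _ := sum_fiberwise _ _ _

lemma sum_volume_arrivals_le [Finite V] [DecidableEq V] (hA : IsSched E A) (v : V) :
    ∑ p ∈ hA.1.toFinset with p.2.2.1.2 = v ∧ p.2.2.1.1 ≠ v, (volume p.2.1).toReal ≤
      {w | E w v ∧ w ≠ v}.ncard *
        ∑ t ∈ Icc 1 (tmax A), sSup ((fun e => edgeLoad A e t) '' {e | E e.1 e.2}) := by
  set W := (Set.toFinite {w | E w v ∧ w ≠ v}).toFinset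
  rw [Set.ncard_eq_toFinset_card _ (Set.toFinite _), ← sum_fiberwise_of_maps_to
    (g := fun p => (p.2.2.1.1, p.2.2.2)) (t := W ×ˢ Icc 1 (tmax A)) ?_]
  · have hW : ∀ wt ∈ W ×ˢ Icc 1 (tmax A), E wt.1 v ∧ wt.1 ≠ v := fun wt hwt =>
      (Set.toFinite {w | E w v ∧ w ≠ v}).mem_toFinset.1 (mem_product.1 hwt).1
    calc _ = ∑ wt ∈ W ×ˢ Icc 1 (tmax A), edgeLoad A (wt.1, v) wt.2 := by
          refine sum_congr rfl fun wt hwt => ?_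
          rw [edgeLoad_eq_sum hA.1, filter_filter]
          refine sum_congr (filter_congr fun p _ => ?_) fun _ _ => rfl
          rw [Prod.ext_iff, Prod.ext_iff]
          constructor
          · rintro ⟨⟨hv, -⟩, hw', ht⟩
            exact ⟨⟨hw', hv⟩, ht⟩
          · rintro ⟨⟨hw', hv⟩, ht⟩
            exact ⟨⟨hv, hw' ▸ (hW wt hwt).2⟩, hw', ht⟩
      _ ≤ ∑ wt ∈ W ×ˢ Icc 1 (tmax A),
            sSup ((fun e => edgeLoad A e wt.2) '' {e | E e.1 e.2}) :=
          sum_le_sum fun wt hwt => edgeLoad_le_sSup (hW wt hwt).1 _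
      _ = _ := by
          rw [sum_product]
          simp only [sum_const, nsmul_eq_mul]
          rfl
  · intro p hp
    simp only [mem_filter, Set.Finite.mem_toFinset] at hp
    obtain ⟨hpA, rfl, hne⟩ := hp
    simp [W, (hA.2 p hpA).1, hne, (hA.2 p hpA).2.2.2, le_tmax hA.1 hpA]

lemma loopless_of_bwT_eq [Finite V] (hcard : 2 ≤ Nat.card V) {d : ℕ} (hreg : IsRegular E d)
    (hA : IsSched E A) (hAG : IsAllgather A) {M B : ℝ} (hM : M ≠ 0) (hB : B ≠ 0)
    (hopt : bwT E d M B A = (M / B) * (((Nat.card V : ℝ) - 1) / (Nat.card V : ℝ))) (v : V) :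
    ¬E v v := by
  classical
  intro hvv
  set L := ∑ t ∈ Icc 1 (tmax A), sSup ((fun e => edgeLoad A e t) '' {e | E e.1 e.2})
  have hN : (2 : ℝ) ≤ Nat.card V := by exact_mod_cast hcard
  have hdL : (d : ℝ) * L = Nat.card V - 1 := by
    simp only [bwT, stepT, ← mul_sum] at hopt
    refine mul_left_cancel₀ (a := M / (B * Nat.card V))
      (div_ne_zero hM (mul_ne_zero hB (by positivity))) ?_
    linear_combination hopt
  have hd : 1 ≤ d := Nat.one_le_iff_ne_zero.2 fun hd => by
    rw [hd, Nat.cast_zero, zero_mul] at hdL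
    linarith
  have hW : {w | E w v ∧ w ≠ v}.ncard = d - 1 := by
    rw [← (hreg v).2, ← Set.ncard_sdiff_singleton_of_mem (s := {w | E w v}) hvv]
    rfl
  have key := (card_sub_one_le_sum_volume_arrivals hA hAG v).trans (sum_volume_arrivals_le hA v)
  rw [hW, Nat.cast_sub hd, Nat.cast_one] at key
  nlinarith

end Loopless

section Reaches

variable {V : Type*} {E : V → V → Prop} {A : Sched V}

/-- `Reaches A u x p q`: the point `x` of the shard of `u`, held at vertex `p.1` after step `p.2`,
can be held at `q.1` after step `q.2`. -/
def Reaches (A : Sched V) (u : V) (x : ℝ) : V × ℕ → V × ℕ → Prop :=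
  Relation.ReflTransGen fun p q =>
    (p.1 = q.1 ∧ p.2 ≤ q.2) ∨ ∃ C, (u, C, (p.1, q.1), q.2) ∈ A ∧ x ∈ C ∧ p.2 < q.2

lemma Reaches.exists_walk {u : V} {x : ℝ} {p q : V × ℕ} (h : Reaches A u x p q) :
    ∃ (m : ℕ) (w : Fin (m + 1) → V) (C : Fin m → Set ℝ) (t : Fin m → ℕ),
      w 0 = p.1 ∧ w (Fin.last m) = q.1 ∧ StrictMono t ∧
      ∀ i, p.2 < t i ∧ (u, C i, (w i.castSucc, w i.succ), t i) ∈ A ∧ x ∈ C i := by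
  induction h using Relation.ReflTransGen.head_induction_on with
  | refl => exact ⟨0, fun _ => q.1, Fin.elim0, Fin.elim0, rfl, rfl, fun i => i.elim0,
      fun i => i.elim0⟩
  | @head p p' hstep _ ih =>
    obtain ⟨m, w, C, t, hw0, hwl, ht, hs⟩ := ih
    rcases hstep with ⟨hp, hle⟩ | ⟨C₀, hC₀, hx, hlt⟩
    · exact ⟨m, w, C, t, hw0.trans hp.symm, hwl, ht,
        fun i => ⟨hle.trans_lt (hs i).1, (hs i).2⟩⟩
    · refine ⟨m + 1, Fin.cons p.1 w, Fin.cons C₀ C, Fin.cons p'.2 t, rfl, ?_,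
        Fin.strictMono_cons.2 ⟨fun i => (hs i).1, ht⟩, Fin.cases ⟨hlt, ?_, hx⟩ fun i => ?_⟩
      · rw [← Fin.succ_last, Fin.cons_succ, hwl]
      · simpa [← hw0] using hC₀
      · simpa [← Fin.succ_castSucc] using ⟨hlt.trans (hs i).1, (hs i).2⟩

lemma reaches_of_walk {u : V} {x : ℝ} : ∀ {m : ℕ} {w : Fin (m + 1) → V} {C : Fin m → Set ℝ}
    {t : Fin m → ℕ} {s s' : ℕ}, StrictMono t →
    (∀ i, (u, C i, (w i.castSucc, w i.succ), t i) ∈ A ∧ x ∈ C i) → s ≤ s' →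
    (∀ i, s < t i ∧ t i ≤ s') → Reaches A u x (w 0, s) (w (Fin.last m), s')
  | 0, _, _, _, _, _, _, _, hss', _ => .single (.inl ⟨rfl, hss'⟩)
  | m + 1, w, C, t, s, s', ht, hs, _, hst => by
    refine .head (b := (w (Fin.succ 0), t 0)) (.inr ⟨C 0, (hs 0).1, (hs 0).2, (hst 0).1⟩) ?_
    rw [← Fin.succ_last]
    exact reaches_of_walk (w := fun k => w k.succ) (ht.comp Fin.strictMono_succ)
      (fun i => by rw [Fin.succ_castSucc]; exact hs i.succ) (hst 0).2
      fun i => ⟨ht (Fin.succ_pos i), (hst i.succ).2⟩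

lemma reaches_of_isAllgather (hA : IsSched E A) (hAG : IsAllgather A) (u v : V) {x : ℝ}
    (hx : x ∈ shard) : Reaches A u x (u, 0) (v, tmax A) := by
  by_cases huv : u = v
  · exact .single (.inl ⟨huv, Nat.zero_le _⟩)
  obtain ⟨m, w, C, t, hw0, hwl, ht, hs⟩ := hAG u v huv x hx
  have h := reaches_of_walk ht hs (Nat.zero_le _)
    fun i => ⟨(hA.2 _ (hs i).1).2.2.2, le_tmax hA.1 (hs i).1⟩
  rwa [hw0, hwl] at h

end Reaches

section PowerSchedule

variable {V : Type*} {E : V → V → Prop} {A : Sched V} {n : ℕ} [NeZero n]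

lemma tmax_powSched (hfin : A.Finite) : tmax (powSched A n) = n * tmax A := by
  rcases A.eq_empty_or_nonempty with rfl | hne
  · simp [tmax, powSched]
  obtain ⟨⟨q, hq, hqT⟩, -⟩ := isGreatest_tmax hfin hne
  obtain ⟨m, rfl⟩ : ∃ m, n = m + 1 := Nat.exists_eq_add_one.2 (NeZero.pos n)
  refine IsGreatest.csSup_eq ⟨⟨_, ⟨0, Fin.last m, q.1, q.2.2.1.1, q.2.2.1.2, q.2.1, q.2.2.2,
    update (fun _ => q.2.2.1.1) (Fin.last m) q.1, fun _ => q.2.2.1.1, hq, by simp, rfl,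
    fun k hk => update_of_ne hk.ne' _ _, rfl⟩, ?_⟩, ?_⟩
  · simp only [Fin.val_last, hqT]
    ring
  · rintro _ ⟨p, ⟨i, j, w, u, v, C, t, a, b, hp, -, -, -, rfl⟩, rfl⟩
    have hj : (j : ℕ) * tmax A ≤ m * tmax A := Nat.mul_le_mul_right _ (Fin.is_le j)
    have ht := le_tmax hfin hp
    linarith

lemma Reaches.lift_powSched {s base : Fin n → V} {i j : Fin n}
    (hbase : ∀ k, j < k → s (k + i) = base k) {y : ℝ} {c c' : V} {τ τ' : ℕ}
    (h : Reaches A (s (j + i)) y (c, τ) (c', τ')) :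
    Reaches (powSched A n) s ((((i : ℕ) : ℝ) + y) / n)
      (rot i (update base j c), τ + j * tmax A) (rot i (update base j c'), τ' + j * tmax A) := by
  refine h.lift (fun p => (rot i (update base j p.1), p.2 + j * tmax A)) fun p q hpq => ?_
  rcases hpq with ⟨hpq, hle⟩ | ⟨C, hC, hy, hlt⟩
  · exact .inl ⟨congrArg (fun c => rot i (update base j c)) hpq, Nat.add_le_add_right hle _⟩
  refine .inr ⟨_, ⟨i, j, s (j + i), p.1, q.1, C, q.2, fun k => s (k + i), update base j p.1, hC,
    rfl, update_self .., fun k hk => by rw [update_of_ne hk.ne', ← hbase k hk], ?_⟩,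
    Set.mem_image_of_mem (fun z : ℝ => (((i : ℕ) : ℝ) + z) / n) hy, Nat.add_lt_add_right hlt _⟩
  rw [rot_add_right, update_idem]

lemma exists_mem_subshard {x : ℝ} (hx : x ∈ shard) :
    ∃ (i : Fin n) (y : ℝ), y ∈ shard ∧ x = (((i : ℕ) : ℝ) + y) / n := by
  have hn : (0 : ℝ) < n := Nat.cast_pos.2 (NeZero.pos n)
  obtain ⟨hx0, hx1⟩ := hx
  have hxn : 0 ≤ x * n := by positivity
  refine ⟨⟨⌊x * n⌋₊, (Nat.floor_lt hxn).2 (by nlinarith)⟩, x * n - ⌊x * n⌋₊,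
    ⟨sub_nonneg.2 (Nat.floor_le hxn), by linarith [Nat.lt_floor_add_one (x * n)]⟩, ?_⟩
  field_simp
  ring

lemma isAllgather_powSched (hA : IsSched E A) (hAG : IsAllgather A) :
    IsAllgather (powSched A n) := by
  intro s g _ x hx
  obtain ⟨i, y, hy, rfl⟩ := exists_mem_subshard (n := n) hx
  set T := tmax A
  -- the position of the point after phase `r`, in coordinates rotated by `i`
  let st (r : ℕ) : Fin n → V := fun k => if (k : ℕ) < r then g (k + i) else s (k + i)
  have hphase : ∀ r ≤ n,
      Reaches (powSched A n) s ((((i : ℕ) : ℝ) + y) / n) (s, 0) (rot i (st r), r * T) := by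
    intro r
    induction r with
    | zero => intro _; simpa [st] using (rot_add_right i s).symm ▸ .refl
    | succ r ih =>
      intro hr
      set j : Fin n := ⟨r, hr⟩
      have hlift := (reaches_of_isAllgather hA hAG (s (j + i)) (g (j + i)) hy).lift_powSched
        (base := st r) fun k hk => by
          have : r < k := hk
          simp only [st, if_neg (by omega : ¬(k : ℕ) < r)]
      have h0 : update (st r) j (s (j + i)) = st r := by
        rw [update_eq_self_iff]
        simp [st, j]
      have h1 : update (st r) j (g (j + i)) = st (r + 1) := by
        funext k
        by_cases hk : k = j
        · simp [hk, st, j]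
        · have : (k : ℕ) ≠ r := fun h => hk (Fin.ext h)
          simp only [update_of_ne hk, st]
          split_ifs <;> first | rfl | omega
      rw [h0, h1, zero_add, show T + j * T = (r + 1) * T by simp only [j]; ring] at hlift
      exact (ih (by omega)).trans hlift
  have hg : rot i (st n) = g := by simpa [st] using rot_add_right i g
  obtain ⟨m, w, C, t, hw0, hwl, ht, hs⟩ := (hphase n le_rfl).exists_walk
  exact ⟨m, w, C, t, hw0, hwl.trans hg, ht, fun k => (hs k).2⟩

/-- Tuples on a product edge at step `t` of phase `j` come only from the subschedule
`i = j₀ - j`; they are indexed by a tuple of `A` on the underlying edge and by the root, which is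
free on the coordinates below `j`. -/
lemma powSched_fiber (hA : IsSched E A) (hloop : ∀ v, ¬E v v) {b : Fin n → V} {i j j₀ : Fin n}
    (hi : j + i = j₀) {y : V} {t : ℕ} (ht : t ∈ Icc 1 (tmax A)) :
    {p | p ∈ powSched A n ∧ p.2.2.1 = (b, update b j₀ y) ∧ p.2.2.2 = t + j * tmax A} =
      (fun x : Tup V × (Fin n → V) => (rot i x.2, (fun z : ℝ => (((i : ℕ) : ℝ) + z) / n) '' x.1.2.1,
        (b, update b j₀ y), t + j * tmax A)) ''
      {x | x.1 ∈ {q : Tup V | q ∈ A ∧ q.2.2.1 = (b j₀, y) ∧ q.2.2.2 = t} ∧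
        x.2 ∈ {a | Set.EqOn a (update (fun k => b (k + i)) j x.1.1) (Set.Ici j)}} := by
  ext p
  constructor
  · rintro ⟨⟨i₁, j₁, w, u, v, C, t₁, a, b₁, hq, ha, hb, hab, rfl⟩, hedge, htime⟩
    obtain ⟨hj, rfl⟩ := eq_of_add_mul_eq_add_mul
      (mem_Icc.2 ⟨(hA.2 _ hq).2.2.2, le_tmax hA.1 hq⟩) ht htime
    obtain rfl := Fin.ext hj
    simp only [Prod.mk.injEq, rot_update] at hedge
    obtain ⟨rfl, hedge⟩ := hedge
    have hu : b₁ j₁ = rot i₁ b₁ (j₁ + i₁) := (rot_apply_add ..).symm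
    obtain ⟨hj, rfl⟩ := eq_of_update_eq_update hedge
      (by rw [← hu, hb]; exact fun h => hloop u (by simpa [h] using (hA.2 _ hq).1))
    obtain rfl : i₁ = i := add_left_cancel (hj.trans hi.symm)
    refine ⟨((w, C, (u, v), t₁), a), ⟨⟨hq, by rw [← hb, hu, hj], rfl⟩, fun k hk => ?_⟩, ?_⟩
    · simp only [rot_apply_add]
      rcases (Set.mem_Ici.1 hk).eq_or_lt with rfl | hk
      · rw [update_self, ha]
      · rw [update_of_ne hk.ne', hab k hk]
    · simp [rot_update, hj]
  · rintro ⟨⟨q, a⟩, ⟨⟨hq, hqe, hqt⟩, ha⟩, rfl⟩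
    refine ⟨⟨i, j, q.1, b j₀, y, q.2.1, t, a, fun k => b (k + i), by rw [← hqe, ← hqt]; exact hq,
      by simpa using ha (Set.self_mem_Ici (a := j)), congrArg b hi,
      fun k hk => by simpa [update_of_ne hk.ne'] using ha (Set.mem_Ici.2 hk.le),
      by rw [rot_update, rot_add_right, hi]⟩, rfl, rfl⟩

lemma edgeLoad_powSched [Finite V] (hA : IsSched E A) (hloop : ∀ v, ¬E v v) (b : Fin n → V)
    (j₀ : Fin n) (y : V) (j : Fin n) {t : ℕ} (ht : t ∈ Icc 1 (tmax A)) :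
    edgeLoad (powSched A n) (b, update b j₀ y) (t + j * tmax A) =
      Nat.card V ^ (j : ℕ) / n * edgeLoad A (b j₀, y) t := by
  have hn : (n : ℝ) ≠ 0 := Nat.cast_ne_zero.2 (NeZero.ne n)
  rw [edgeLoad, powSched_fiber hA hloop (add_sub_cancel j j₀) ht, finsum_mem_image]
  · rw [finsum_mem_congr rfl fun x _ => by rw [volume_image_add_div _ (NeZero.ne n),
        ENNReal.toReal_div, ENNReal.toReal_natCast, div_eq_inv_mul],
      finsum_mem_fst_of_ncard_eq (s := {q : Tup V | q ∈ A ∧ q.2.2.1 = (b j₀, y) ∧ q.2.2.2 = t})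
        (g := fun q => {a | Set.EqOn a (update (fun k => b (k + (j₀ - j))) j q.1) (Set.Ici j)})
        (hA.1.subset fun q hq => hq.1) (fun _ _ => ncard_setOf_eqOn_Ici j _)
        fun q => (n : ℝ)⁻¹ * (volume q.2.1).toReal,
      ← mul_finsum_mem, edgeLoad, nsmul_eq_mul]
    push_cast
    ring
  · rintro ⟨q, a⟩ ⟨⟨-, hqe, hqt⟩, ha⟩ ⟨q', a'⟩ ⟨⟨-, hqe', hqt'⟩, ha'⟩ h
    simp only [Prod.mk.injEq] at h
    obtain ⟨h₁, h₂, -⟩ := h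
    obtain rfl := rot_injective _ h₁
    have hC : q.2.1 = q'.2.1 := Set.image_injective.2 (fun z z' h => by simpa [hn] using h) h₂
    have hw : q.1 = q'.1 := by
      simpa using (ha Set.self_mem_Ici).symm.trans (ha' Set.self_mem_Ici)
    exact Prod.ext (Prod.ext hw (Prod.ext hC (Prod.ext (hqe.trans hqe'.symm)
      (hqt.trans hqt'.symm)))) rfl

lemma image_edgeLoad_powSched [Finite V] (hA : IsSched E A) (hloop : ∀ v, ¬E v v) (j : Fin n)
    {t : ℕ} (ht : t ∈ Icc 1 (tmax A)) :
    (fun e => edgeLoad (powSched A n) e (t + j * tmax A)) '' {e | powE E n e.1 e.2} =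
      ((Nat.card V : ℝ) ^ (j : ℕ) / n) • ((fun e => edgeLoad A e t) '' {e | E e.1 e.2}) := by
  rw [← Set.image_smul, Set.image_image]
  ext r
  constructor
  · rintro ⟨⟨p, q⟩, hpq, rfl⟩
    obtain ⟨j₀, y, hy, rfl⟩ : ∃ j₀ y, E (p j₀) y ∧ q = update p j₀ y := powE_iff.1 hpq
    exact ⟨(p j₀, y), hy, (edgeLoad_powSched hA hloop p j₀ y j ht).symm⟩
  · rintro ⟨⟨x, y⟩, hxy, rfl⟩
    exact ⟨(fun _ => x, update (fun _ => x) j y), powE_iff.2 ⟨j, y, hxy, rfl⟩,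
      edgeLoad_powSched hA hloop (fun _ => x) j y j ht⟩

lemma stepT_powSched [Finite V] [Nonempty V] (hA : IsSched E A) (hloop : ∀ v, ¬E v v) (d : ℕ)
    (M B : ℝ) (j : Fin n) {t : ℕ} (ht : t ∈ Icc 1 (tmax A)) :
    stepT (powE E n) (n * d) M B (powSched A n) (t + j * tmax A) =
      (Nat.card V : ℝ) ^ ((j : ℕ) + 1) / Nat.card V ^ n * stepT E d M B A t := by
  have hN : (Nat.card V : ℝ) ≠ 0 := Nat.cast_ne_zero.2 Nat.card_pos.ne'
  have hn : (n : ℝ) ≠ 0 := Nat.cast_ne_zero.2 (NeZero.ne n)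
  rw [stepT, stepT, image_edgeLoad_powSched hA hloop j ht,
    Real.sSup_smul_of_nonneg (by positivity), Nat.card_fun, Nat.card_fin, smul_eq_mul]
  field_simp
  push_cast
  ring

lemma bwT_powSched [Finite V] [Nonempty V] (hA : IsSched E A) (hloop : ∀ v, ¬E v v) (d : ℕ)
    (M B : ℝ) :
    bwT (powE E n) (n * d) M B (powSched A n) =
      (∑ j ∈ range n, (Nat.card V : ℝ) ^ (j + 1)) / Nat.card V ^ n * bwT E d M B A := by
  rw [bwT, tmax_powSched hA.1, sum_Icc_mul_eq_sum_sum, bwT, sum_div, sum_mul]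
  refine sum_congr rfl fun j hj => ?_
  rw [mul_sum]
  exact sum_congr rfl fun t ht => stepT_powSched hA hloop d M B ⟨j, mem_range.1 hj⟩ ht

end PowerSchedule

/-- Cartesian power expansion preserves bandwidth optimality: if `(G,A_G)`
is a bandwidth optimal allgather algorithm, then `(G^{□n}, A_{G^{□n}})` is a bandwidth
optimal allgather algorithm on `N^n` nodes. -/
theorem cartesian_power_bw_optimal {V : Type*} [Finite V]
    (E : V → V → Prop) (d : ℕ) (A : Sched V)
    (hcard : 2 ≤ Nat.card V) (hreg : IsRegular E d) (hA : IsSched E A)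
    (hAG : IsAllgather A)
    (M B : ℝ) (hM : 0 < M) (hB : 0 < B)
    (hopt : bwT E d M B A
      = (M / B) * (((Nat.card V : ℝ) - 1) / (Nat.card V : ℝ)))
    (n : ℕ) (hn : 1 ≤ n) :
    IsAllgather (powSched A n) ∧
    bwT (powE E n) (n * d) M B (powSched A n)
      = (M / B) * (((Nat.card V : ℝ) ^ n - 1) / (Nat.card V : ℝ) ^ n) := by
  have : Nonempty V := (Nat.card_pos_iff.1 (by omega)).1
  have : NeZero n := ⟨by omega⟩
  have hloop := loopless_of_bwT_eq hcard hreg hA hAG hM.ne' hB.ne' hopt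
  refine ⟨isAllgather_powSched hA hAG, ?_⟩
  rw [bwT_powSched hA hloop, hopt]
  simp only [pow_succ, ← sum_mul]
  field_simp
  exact geom_sum_mul _ n

end Collective
end

section
/- Let d ≥ 2 and m > d be natural numbers and let Π_{d,m} be the generalized Kautz digraph. If Π_{d,m} is strongly connected with diameter D(Π_{d,m}) = k, then m ≥ Σ_{i=0}^{k−2} d^i (i.e., m is at least the Moore bound M_{d,k−2}). -/
open MeasureTheory

namespace Collective


private lemma hasWalk_cons {V : Type*} {E : V → V → Prop} {u v x : V} {n : ℕ}
    (h : E u v) (hw : HasWalk E v x n) : HasWalk E u x (n + 1) := by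
  obtain ⟨w, h0, hl, hs⟩ := hw
  refine ⟨Fin.cons u w, rfl, ?_, ?_⟩
  · have : Fin.last (n + 1) = Fin.succ (Fin.last n) := rfl
    rw [this, Fin.cons_succ, hl]
  · intro i
    induction i using Fin.cases with
    | zero => simpa [Fin.cons_succ, h0] using h
    | succ j =>
        have h1 : (Fin.succ j).castSucc = (j.castSucc).succ := (Fin.succ_castSucc j).symm
        rw [h1, Fin.cons_succ, Fin.cons_succ]
        exact hs j

private lemma step_aux (d m t : ℕ) (L : ℤ)
    (hL : ∀ (u : ZMod m) (c : ℤ), L ≤ c → c < L + (d : ℤ) ^ t →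
      HasWalk (kautzE d m) u ((-(d : ZMod m)) ^ t * u - ((c : ℤ) : ZMod m)) t)
    (u : ZMod m) (c : ℤ) (b0 : ℕ) (hb1 : 1 ≤ b0) (hb2 : b0 ≤ d) (s : ℤ)
    (hs1 : L ≤ s) (hs2 : s < L + (d : ℤ) ^ t)
    (hc : c = (-(d : ℤ)) ^ t * (b0 : ℤ) + s) :
    HasWalk (kautzE d m) u ((-(d : ZMod m)) ^ (t + 1) * u - ((c : ℤ) : ZMod m)) (t + 1) := by
  set v : ZMod m := -(d : ZMod m) * u - (b0 : ZMod m) with hv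
  have hedge : kautzE d m u v := ⟨b0, hb1, hb2, rfl⟩
  have hw := hL v s hs1 hs2
  have hcast : ((c : ℤ) : ZMod m) = (-(d : ZMod m)) ^ t * (b0 : ZMod m) + ((s : ℤ) : ZMod m) := by
    rw [hc]; push_cast; ring
  have hEq : (-(d : ZMod m)) ^ t * v - ((s : ℤ) : ZMod m)
      = (-(d : ZMod m)) ^ (t + 1) * u - ((c : ℤ) : ZMod m) := by
    rw [hcast, hv]; ring
  rw [← hEq]
  exact hasWalk_cons hedge hw

private lemma kautz_walk (d m : ℕ) (hd : 2 ≤ d) (t : ℕ) :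
    ∃ L : ℤ, ∀ (u : ZMod m) (c : ℤ), L ≤ c → c < L + (d : ℤ) ^ t →
      HasWalk (kautzE d m) u ((-(d : ZMod m)) ^ t * u - ((c : ℤ) : ZMod m)) t := by
  induction t with
  | zero =>
      refine ⟨0, fun u c h1 h2 => ?_⟩
      have hc : c = 0 := by simp only [pow_zero] at h2; omega
      subst hc
      exact ⟨fun _ => u, rfl, by simp, fun i => i.elim0⟩
  | succ t ih =>
      obtain ⟨L, hL⟩ := ih
      have hD : (0 : ℤ) < (d : ℤ) ^ t := by positivity
      rcases Nat.even_or_odd t with he | ho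
      · -- (-d)^t = d^t ; new interval [L + d^t, L + d^t + d^(t+1))
        refine ⟨L + (d : ℤ) ^ t, fun u c h1 h2 => ?_⟩
        set q : ℤ := (c - L) / (d : ℤ) ^ t with hq
        set r : ℤ := (c - L) % (d : ℤ) ^ t with hr
        have hqr : (d : ℤ) ^ t * q + r = c - L := Int.mul_ediv_add_emod _ _
        have hr0 : 0 ≤ r := Int.emod_nonneg _ hD.ne'
        have hrlt : r < (d : ℤ) ^ t := Int.emod_lt_of_pos _ hD
        have hbound : (d : ℤ) ^ t ≤ c - L ∧ c - L < (d : ℤ) ^ t * (1 + d) := by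
          constructor
          · linarith
          · have : (d : ℤ) ^ (t + 1) = (d : ℤ) ^ t * d := pow_succ _ _
            nlinarith [h2]
        have hq1 : 1 ≤ q := by nlinarith [hbound.1, hbound.2]
        have hqd : q ≤ (d : ℤ) := by nlinarith [hbound.1, hbound.2]
        have hb0 : ((q.toNat : ℤ)) = q := Int.toNat_of_nonneg (by linarith)
        refine step_aux d m t L hL u c q.toNat ?_ ?_ (L + r) (by linarith) (by linarith) ?_
        · omega
        · omega
        · rw [Even.neg_pow he, hb0]; linarith
      · -- (-d)^t = -(d^t) ; new interval [L - d^(t+1), L)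
        refine ⟨L - (d : ℤ) ^ (t + 1), fun u c h1 h2 => ?_⟩
        set q : ℤ := (c - L) / (d : ℤ) ^ t with hq
        set r : ℤ := (c - L) % (d : ℤ) ^ t with hr
        have hqr : (d : ℤ) ^ t * q + r = c - L := Int.mul_ediv_add_emod _ _
        have hr0 : 0 ≤ r := Int.emod_nonneg _ hD.ne'
        have hrlt : r < (d : ℤ) ^ t := Int.emod_lt_of_pos _ hD
        have hpow : (d : ℤ) ^ (t + 1) = (d : ℤ) ^ t * d := pow_succ _ _
        have hbound : -((d : ℤ) ^ t * d) ≤ c - L ∧ c - L < 0 := by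
          constructor <;> linarith [h2, h1, hpow ▸ h1]
        have hq1 : q ≤ -1 := by nlinarith [hbound.1, hbound.2]
        have hqd : -(d : ℤ) ≤ q := by nlinarith [hbound.1, hbound.2]
        have hb0 : (((-q).toNat : ℤ)) = -q := Int.toNat_of_nonneg (by linarith)
        refine step_aux d m t L hL u c (-q).toNat ?_ ?_ (L + r) (by linarith) (by linarith) ?_
        · omega
        · omega
        · rw [Odd.neg_pow ho, hb0]; linarith

private lemma geom_lt (d : ℕ) (hd : 2 ≤ d) : ∀ n, (∑ i ∈ Finset.range n, d ^ i) < d ^ n := by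
  intro n
  induction n with
  | zero => simp
  | succ n ih =>
      rw [Finset.sum_range_succ, pow_succ]
      have h2 : d ^ n * 2 ≤ d ^ n * d := Nat.mul_le_mul_left _ hd
      omega

/-- if the generalized Kautz digraph `Π_{d,m}` (with `d ≥ 2`, `m > d`) is
strongly connected with diameter `k`, then `m ≥ Σ_{i=0}^{k−2} d^i = M_{d,k−2}`. -/
theorem generalized_kautz_diameter (d m : ℕ) (hd : 2 ≤ d) (hm : d < m)
    (hsc : StronglyConnected (kautzE d m)) (k : ℕ) (hk : diam (kautzE d m) = k) :
    (∑ i ∈ Finset.range (k - 1), d ^ i) ≤ m := by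
  rcases Nat.eq_zero_or_pos k with rfl | hk1
  · simp
  · have hdm : d ^ (k - 1) < m := by
      by_contra hcon
      push_neg at hcon
      obtain ⟨L, hL⟩ := kautz_walk d m hd (k - 1)
      have hm0 : (0 : ℤ) < (m : ℤ) := by exact_mod_cast (show 0 < m by omega)
      have hmd : (m : ℤ) ≤ (d : ℤ) ^ (k - 1) := by exact_mod_cast hcon
      have hdist : ∀ u v : ZMod m, dist (kautzE d m) u v ≤ k - 1 := by
        intro u v
        obtain ⟨z, hz⟩ := ZMod.intCast_surjective ((-(d : ZMod m)) ^ (k - 1) * u - v)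
        set c : ℤ := L + (z - L) % (m : ℤ) with hcdef
        have hr0 : 0 ≤ (z - L) % (m : ℤ) := Int.emod_nonneg _ hm0.ne'
        have hrlt : (z - L) % (m : ℤ) < (m : ℤ) := Int.emod_lt_of_pos _ hm0
        have hw := hL u c (by omega) (by omega)
        have hcz : ((c : ℤ) : ZMod m) = ((z : ℤ) : ZMod m) := by
          rw [hcdef]
          push_cast [ZMod.intCast_mod]
          ring
        have hEq : (-(d : ZMod m)) ^ (k - 1) * u - ((c : ℤ) : ZMod m) = v := by
          rw [hcz, hz]; ring
        rw [hEq] at hw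
        exact Nat.sInf_le hw
      have hdiam : diam (kautzE d m) ≤ k - 1 := by
        refine csSup_le ⟨dist (kautzE d m) 0 0, 0, 0, rfl⟩ ?_
        rintro n ⟨u, v, rfl⟩
        exact hdist u v
      omega
    have := geom_lt d hd (k - 1)
    omega

end Collective
end
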